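/- arXiv:1907.13367 — 3 statements merged into one kernel-verified Lean document; each statement's English description precedes it below -/
import Mathlib

section
/- Let R be a subdirectly irreducible *-regular ring with nonzero socle. Then the socle of R equals the unique minimal two-sided ideal M(R) of R. -/
/-- A right ideal of a ring, as a set. -/
def IsRightIdeal {R : Type*} [Ring R] (I : Set R) : Prop :=
  (0 : R) ∈ I ∧ (∀ a ∈ I, ∀ b ∈ I, a + b ∈ I) ∧ ∀ a ∈ I, ∀ r : R, a * r ∈ I

/-- A minimal right ideal: an atom in the lattice of right ideals. -/
def IsMinimalRightIdeal {R : Type*} [Ring R] (I : Set R) : Prop :=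
  IsRightIdeal I ∧ I ≠ {0} ∧ ∀ J : Set R, IsRightIdeal J → J ⊆ I → J = {0} ∨ J = I

/-- The socle of a ring: the sum of its minimal right ideals, i.e. the set of
finite sums of elements of minimal right ideals. -/
def ringSocle (R : Type*) [Ring R] : Set R :=
  {a | ∃ l : List R, (∀ x ∈ l, ∃ I : Set R, IsMinimalRightIdeal I ∧ x ∈ I) ∧ a = l.sum}

/-- If `x` kills the minimal ideal `M` on the left, then `x = 0`. -/
lemma ann_eq_zero {R : Type*} [Ring R]
    (hreg : ∀ a : R, ∃ x : R, a * x * a = a)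
    (M : TwoSidedIdeal R) (hM_ne : M ≠ ⊥)
    (hM_min : ∀ J : TwoSidedIdeal R, J ≠ ⊥ → M ≤ J)
    (x : R) (hx : ∀ m ∈ M, x * m = 0) : x = 0 := by
  set Lc : Set R := {x : R | ∀ m ∈ M, x * m = 0} with hLc
  have hz : (0 : R) ∈ Lc := fun m _ => by simp
  have hadd : ∀ {a b : R}, a ∈ Lc → b ∈ Lc → a + b ∈ Lc := by
    intro a b ha hb m hm
    rw [add_mul, ha m hm, hb m hm, add_zero]
  have hneg : ∀ {a : R}, a ∈ Lc → -a ∈ Lc := by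
    intro a ha m hm
    rw [neg_mul, ha m hm, neg_zero]
  have hml : ∀ {a b : R}, b ∈ Lc → a * b ∈ Lc := by
    intro a b hb m hm
    rw [mul_assoc, hb m hm, mul_zero]
  have hmr : ∀ {a b : R}, a ∈ Lc → a * b ∈ Lc := by
    intro a b ha m hm
    rw [mul_assoc]
    exact ha _ (M.mul_mem_left b m hm)
  set L : TwoSidedIdeal R := TwoSidedIdeal.mk' Lc hz hadd hneg hml hmr with hL
  by_cases hbot : L = ⊥
  · have : x ∈ L := by rw [hL, TwoSidedIdeal.mem_mk']; exact hx
    rw [hbot, TwoSidedIdeal.mem_bot] at this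
    exact this
  · exfalso
    have hML : M ≤ L := hM_min L hbot
    apply hM_ne
    rw [eq_bot_iff]
    intro m hm
    rw [TwoSidedIdeal.mem_bot]
    obtain ⟨y, hy⟩ := hreg m
    have hmy : m * y ∈ M := M.mul_mem_right m y hm
    have : m * y ∈ Lc := by
      have := hML hmy
      rwa [hL, TwoSidedIdeal.mem_mk'] at this
    calc m = m * y * m := hy.symm
    _ = 0 := this m hm

/-- Every minimal right ideal is contained in `M`. -/
lemma minimal_subset {R : Type*} [Ring R]
    (hreg : ∀ a : R, ∃ x : R, a * x * a = a)
    (M : TwoSidedIdeal R) (hM_ne : M ≠ ⊥)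
    (hM_min : ∀ J : TwoSidedIdeal R, J ≠ ⊥ → M ≤ J)
    (I : Set R) (hI : IsMinimalRightIdeal I) : I ⊆ (M : Set R) := by
  obtain ⟨⟨hz, hadd, hmul⟩, hne, hmin⟩ := hI
  have hK : IsRightIdeal (I ∩ (M : Set R)) := by
    refine ⟨⟨hz, M.zero_mem⟩, ?_, ?_⟩
    · rintro a ⟨haI, haM⟩ b ⟨hbI, hbM⟩
      exact ⟨hadd a haI b hbI, M.add_mem haM hbM⟩
    · rintro a ⟨haI, haM⟩ r
      exact ⟨hmul a haI r, M.mul_mem_right a r haM⟩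
  rcases hmin _ hK Set.inter_subset_left with h0 | hI'
  · exfalso
    apply hne
    apply Set.eq_of_subset_of_subset
    · intro x hxI
      have : x = 0 := by
        apply ann_eq_zero hreg M hM_ne hM_min
        intro m hm
        have : x * m ∈ I ∩ (M : Set R) :=
          ⟨hmul x hxI m, M.mul_mem_left x m hm⟩
        rw [h0] at this
        exact this
      simpa using this
    · intro x hx
      rw [Set.mem_singleton_iff] at hx
      rw [hx]; exact hz
  · intro x hx
    have : x ∈ I ∩ (M : Set R) := by rw [hI']; exact hx
    exact this.2

/-- The image of a minimal right ideal under left multiplication is either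
zero or minimal. -/
lemma image_minimal {R : Type*} [Ring R] (r : R) (I : Set R)
    (hI : IsMinimalRightIdeal I) (hne : (r * ·) '' I ≠ {0}) :
    IsMinimalRightIdeal ((r * ·) '' I) := by
  obtain ⟨⟨hz, hadd, hmul⟩, hIne, hmin⟩ := hI
  refine ⟨⟨⟨0, hz, by simp⟩, ?_, ?_⟩, hne, ?_⟩
  · rintro a ⟨x, hx, rfl⟩ b ⟨y, hy, rfl⟩
    exact ⟨x + y, hadd x hx y hy, by simp [mul_add]⟩
  · rintro a ⟨x, hx, rfl⟩ s
    exact ⟨x * s, hmul x hx s, by simp [mul_assoc]⟩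
  · intro J hJ hJsub
    set P : Set R := {x ∈ I | r * x ∈ J} with hP
    have hPideal : IsRightIdeal P := by
      refine ⟨⟨hz, by simpa using hJ.1⟩, ?_, ?_⟩
      · rintro a ⟨haI, haJ⟩ b ⟨hbI, hbJ⟩
        exact ⟨hadd a haI b hbI, by rw [mul_add]; exact hJ.2.1 _ haJ _ hbJ⟩
      · rintro a ⟨haI, haJ⟩ s
        exact ⟨hmul a haI s, by rw [← mul_assoc]; exact hJ.2.2 _ haJ s⟩
    rcases hmin P hPideal (fun x hx => hx.1) with h0 | hPI
    · left
      apply Set.eq_of_subset_of_subset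
      · intro j hj
        obtain ⟨x, hxI, rfl⟩ := hJsub hj
        have : x ∈ P := ⟨hxI, hj⟩
        rw [h0] at this
        simp [Set.mem_singleton_iff.1 this]
      · intro j hj
        rw [Set.mem_singleton_iff] at hj
        rw [hj]; exact hJ.1
    · right
      apply Set.eq_of_subset_of_subset hJsub
      rintro a ⟨x, hxI, rfl⟩
      have : x ∈ P := hPI ▸ hxI
      exact this.2

lemma soc_zero_mem {R : Type*} [Ring R] : (0 : R) ∈ ringSocle R :=
  ⟨[], by simp, by simp⟩

lemma soc_add_mem {R : Type*} [Ring R] {a b : R}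
    (ha : a ∈ ringSocle R) (hb : b ∈ ringSocle R) : a + b ∈ ringSocle R := by
  obtain ⟨l1, hl1, rfl⟩ := ha
  obtain ⟨l2, hl2, rfl⟩ := hb
  exact ⟨l1 ++ l2, fun x hx => by
    rcases List.mem_append.1 hx with h | h
    exacts [hl1 x h, hl2 x h], by simp⟩

lemma soc_mul_left {R : Type*} [Ring R] {a : R} (r : R)
    (ha : a ∈ ringSocle R) : r * a ∈ ringSocle R := by
  obtain ⟨l, hl, rfl⟩ := ha
  induction l with
  | nil => simpa using soc_zero_mem
  | cons x l ih =>
    rw [List.sum_cons, mul_add]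
    refine soc_add_mem ?_ (ih (fun y hy => hl y (List.mem_cons_of_mem x hy)))
    by_cases hrx : r * x = 0
    · rw [hrx]; exact soc_zero_mem
    · obtain ⟨I, hI, hxI⟩ := hl x (List.mem_cons_self (a := x) (l := l))
      have hne : (r * ·) '' I ≠ {0} := by
        intro h
        apply hrx
        have : r * x ∈ (r * ·) '' I := ⟨x, hxI, rfl⟩
        rw [h] at this
        exact this
      exact ⟨[r * x], fun y hy => by
        simp only [List.mem_singleton] at hy
        exact ⟨(r * ·) '' I, image_minimal r I hI hne, hy ▸ ⟨x, hxI, rfl⟩⟩, by simp⟩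

lemma soc_mul_right {R : Type*} [Ring R] {a : R} (r : R)
    (ha : a ∈ ringSocle R) : a * r ∈ ringSocle R := by
  obtain ⟨l, hl, rfl⟩ := ha
  refine ⟨l.map (· * r), ?_, ?_⟩
  · intro x hx
    obtain ⟨y, hy, rfl⟩ := List.mem_map.1 hx
    obtain ⟨I, hI, hyI⟩ := hl y hy
    exact ⟨I, hI, hI.1.2.2 y hyI r⟩
  · induction l with
    | nil => simp
    | cons x l ih =>
      simp only [List.map_cons, List.sum_cons, add_mul]
      rw [ih (fun y hy => hl y (List.mem_cons_of_mem x hy))]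

lemma soc_neg_mem {R : Type*} [Ring R] {a : R}
    (ha : a ∈ ringSocle R) : -a ∈ ringSocle R := by
  have := soc_mul_left (-1 : R) ha
  simpa using this

/-- If `R` is a subdirectly irreducible `*`-regular ring (with unique minimal
two-sided ideal `M`) and `R` has nonzero socle, then the socle equals `M`. -/
theorem socle_eq_minimal_ideal_of_subdirectly_irreducible
    {R : Type*} [Ring R] [StarRing R]
    (hreg : ∀ a : R, ∃ x : R, a * x * a = a)
    (hstar : ∀ a : R, a * star a = 0 → a = 0)
    (M : TwoSidedIdeal R)
    (hM_ne : M ≠ ⊥)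
    (hM_min : ∀ J : TwoSidedIdeal R, J ≠ ⊥ → M ≤ J)
    (hsoc : ringSocle R ≠ {0}) :
    ringSocle R = (M : Set R) := by
  apply Set.eq_of_subset_of_subset
  · -- socle ⊆ M
    rintro a ⟨l, hl, rfl⟩
    induction l with
    | nil => simpa using M.zero_mem
    | cons x l ih =>
      rw [List.sum_cons]
      refine M.add_mem ?_ (ih (fun y hy => hl y (List.mem_cons_of_mem x hy)))
      obtain ⟨I, hI, hxI⟩ := hl x (List.mem_cons_self (a := x) (l := l))
      exact minimal_subset hreg M hM_ne hM_min I hI hxI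
  · -- M ⊆ socle
    set S : TwoSidedIdeal R := TwoSidedIdeal.mk' (ringSocle R) soc_zero_mem
      (fun ha hb => soc_add_mem ha hb) (fun ha => soc_neg_mem ha)
      (fun {x y} hy => soc_mul_left x hy) (fun {x y} hx => soc_mul_right y hx) with hS
    have hSne : S ≠ ⊥ := by
      intro h
      apply hsoc
      apply Set.eq_of_subset_of_subset
      · intro x hx
        have : x ∈ S := by rw [hS, TwoSidedIdeal.mem_mk']; exact hx
        rw [h, TwoSidedIdeal.mem_bot] at this
        simp [this]
      · intro x hx
        rw [Set.mem_singleton_iff] at hx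
        rw [hx]; exact soc_zero_mem
    intro m hm
    have : m ∈ S := hM_min S hSne hm
    rwa [hS, TwoSidedIdeal.mem_mk'] at this
end

section
/- Let R be a *-regular ring and I a two-sided ideal of R. Then I is a *-ideal, i.e., closed under the involution: for every a ∈ I one has star a ∈ I. -/
/-- In a `*`-regular ring (a ring with involution that is von Neumann regular
and in which `a * star a = 0` implies `a = 0`), every two-sided ideal is a
`*`-ideal, i.e. closed under the involution. -/
theorem twoSidedIdeal_star_closed_of_star_regular
    {R : Type*} [Ring R] [StarRing R]
    (hreg : ∀ a : R, ∃ x : R, a * x * a = a)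
    (hstar : ∀ a : R, a * star a = 0 → a = 0)
    (I : TwoSidedIdeal R) :
    ∀ a ∈ I, star a ∈ I := by
  intro a ha
  obtain ⟨y, hy⟩ := hreg (a * star a)
  -- claim: a = a * star a * y * a
  have key : a = a * star a * y * a := by
    set c := a - a * star a * y * a with hc
    have h0 : c * star c = 0 := by
      have hsc : star c = star a - star a * star y * (a * star a) := by
        simp [hc, mul_assoc, sub_mul, mul_sub, star_mul]
      rw [hsc, hc]
      linear_combination (norm := noncomm_ring) hy * (star y * (a * star a)) - hy
    have := hstar c h0
    have : a - a * star a * y * a = 0 := this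
    linear_combination (norm := noncomm_ring) this
  have : star a = star a * star y * a * star a := by
    conv_lhs => rw [key]
    simp [star_mul, mul_assoc]
  rw [this]
  exact I.mul_mem_right _ _ (I.mul_mem_left _ _ ha)
end

section
/- Let R be a *-regular ring and I a two-sided ideal of R. Then the quotient ring R/I, with involution induced by a + I ↦ star a + I, is again a *-regular ring: it is von Neumann regular and x * star x = 0 implies x = 0 for all x ∈ R/I. -/
/-- If `R` is a `*`-regular ring and `I` a two-sided ideal of `R`, then the
quotient ring `R/I`, with the involution induced by `a + I ↦ star a + I`, is
again `*`-regular: it is von Neumann regular, and `x * star x = 0` implies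
`x = 0` in `R/I`.  (The induced involution sends the class of `a` to the class
of `star a`, so the latter condition is expressed on representatives.) -/
theorem quotient_of_star_regular_is_star_regular
    {R : Type*} [Ring R] [StarRing R]
    (hreg : ∀ a : R, ∃ x : R, a * x * a = a)
    (hstar : ∀ a : R, a * star a = 0 → a = 0)
    (I : TwoSidedIdeal R) :
    (∀ x : I.ringCon.Quotient, ∃ y : I.ringCon.Quotient, x * y * x = x) ∧
    (∀ a : R, I.ringCon.mk' (a * star a) = 0 → I.ringCon.mk' a = 0) := by
  have hmem : ∀ b : R, I.ringCon.mk' b = 0 ↔ b ∈ I := by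
    intro b
    rw [show (0 : I.ringCon.Quotient) = I.ringCon.mk' 0 from rfl]
    rw [show (I.ringCon.mk' b = I.ringCon.mk' 0) ↔ I.ringCon b 0 from RingCon.eq _]
    rw [TwoSidedIdeal.mem_iff]
  constructor
  · intro x
    obtain ⟨a, rfl⟩ := Quotient.exists_rep x
    obtain ⟨y, hy⟩ := hreg a
    refine ⟨I.ringCon.mk' y, ?_⟩
    show I.ringCon.mk' a * I.ringCon.mk' y * I.ringCon.mk' a = I.ringCon.mk' a
    rw [← map_mul, ← map_mul, hy]
  · intro a ha
    obtain ⟨x, hx⟩ := hreg (a * star a)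
    have h1 : star (a - (a * star a) * x * a) = star a - star a * star x * (a * star a) := by
      simp [star_sub, star_mul, star_star, mul_assoc]
    have expand : (a - (a * star a) * x * a) * (star a - star a * star x * (a * star a)) =
        (a * star a) - (a * star a) * star x * (a * star a)
          - ((a * star a) * x * (a * star a))
          + ((a * star a) * x * (a * star a)) * star x * (a * star a) := by
      noncomm_ring
    have hd : (a - (a * star a) * x * a) * star (a - (a * star a) * x * a) = 0 := by
      rw [h1, expand, hx]
      noncomm_ring
    have key : a = a * star a * x * a := by
      have := hstar _ hd
      have := sub_eq_zero.mp this
      exact this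
    rw [hmem] at ha ⊢
    rw [key]
    exact I.mul_mem_right _ _ (I.mul_mem_right _ _ ha)
end
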